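/- arXiv:1912.10217 — 2 statements merged into one kernel-verified Lean document; each statement's English description precedes it below -/
import Mathlib

section
/- Let G ≤ Sym(Ω) and let e be a G-invariant equivalence relation on Ω. Let G_e be the intersection of the setwise stabilizers of all classes of e. Then the 2-closure of G_e is contained in (G^(2))_e, the kernel of the action of the 2-closure of G on Ω/e. -/
open MulAction

/-- The 2-closure of a permutation group `G ≤ Sym(Ω)`: all permutations of `Ω`
preserving every orbit of `G` on `Ω × Ω`. -/
def twoClosure {Ω : Type*} (G : Subgroup (Equiv.Perm Ω)) : Subgroup (Equiv.Perm Ω) where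
  carrier := {k | ∀ a b : Ω, (k a, k b) ∈ MulAction.orbit G ((a, b) : Ω × Ω)}
  one_mem' := by
    intro a b
    simp only [Equiv.Perm.one_apply]
    exact MulAction.mem_orbit_self ((a, b) : Ω × Ω)
  mul_mem' := by
    intro k l hk hl a b
    have h1 : ((l a, l b) : Ω × Ω) ∈ MulAction.orbit G ((a, b) : Ω × Ω) := hl a b
    have h2 := hk (l a) (l b)
    rw [(MulAction.orbit_eq_iff).2 h1] at h2
    simpa using h2
  inv_mem' := by
    intro k hk a b
    have h := hk (k⁻¹ a) (k⁻¹ b)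
    simp only [Equiv.Perm.inv_def, Equiv.apply_symm_apply] at h
    have := (MulAction.orbit_eq_iff).2 h
    rw [this]
    exact MulAction.mem_orbit_self _

theorem le_twoClosure {Ω : Type*} (G : Subgroup (Equiv.Perm Ω)) : G ≤ twoClosure G := by
  intro g hg a b
  exact ⟨⟨g, hg⟩, rfl⟩

/-- The subgroup of all permutations stabilizing every class of the equivalence
relation `s` setwise (i.e. `g` maps each point into its own class). -/
def classStab {Ω : Type*} (s : Setoid Ω) : Subgroup (Equiv.Perm Ω) where
  carrier := {g | ∀ a : Ω, s.r (g a) a}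
  one_mem' := fun a => s.refl' a
  mul_mem' := by
    intro g l hg hl a
    exact s.trans' (hg (l a)) (hl a)
  inv_mem' := by
    intro g hg a
    have := hg (g⁻¹ a)
    simp only [Equiv.Perm.inv_def, Equiv.apply_symm_apply] at this
    exact s.symm' this

/-! Taking 2-closures is monotone, and `classStab s` is 2-closed: evaluating the 2-closure
condition on a diagonal pair `(a, a)` shows that its elements move each point within its
`G`-orbit. -/

theorem twoClosure_mono {Ω : Type*} {G H : Subgroup (Equiv.Perm Ω)} (hGH : G ≤ H) :
    twoClosure G ≤ twoClosure H := by
  intro k hk a b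
  obtain ⟨⟨g, hg⟩, hga⟩ := hk a b
  exact ⟨⟨g, hGH hg⟩, hga⟩

theorem apply_mem_orbit_of_mem_twoClosure {Ω : Type*} {G : Subgroup (Equiv.Perm Ω)}
    {k : Equiv.Perm Ω} (hk : k ∈ twoClosure G) (a : Ω) : k a ∈ MulAction.orbit G a := by
  obtain ⟨g, hga⟩ := hk a a
  exact ⟨g, congrArg Prod.fst hga⟩

theorem twoClosure_classStab {Ω : Type*} (s : Setoid Ω) :
    twoClosure (classStab s) = classStab s := by
  refine le_antisymm (fun k hk a => ?_) (le_twoClosure _)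
  obtain ⟨⟨g, hg⟩, hga⟩ := apply_mem_orbit_of_mem_twoClosure hk a
  exact hga ▸ hg a

theorem twoClosure_classKernel_le_general
    {Ω : Type*} (G : Subgroup (Equiv.Perm Ω)) (s : Setoid Ω) :
    twoClosure (G ⊓ classStab s) ≤ twoClosure G ⊓ classStab s :=
  le_inf (twoClosure_mono inf_le_left)
    ((twoClosure_mono inf_le_right).trans (twoClosure_classStab s).le)

/-- if `e` (the setoid `s`) is a `G`-invariant equivalence relation and
`G_e` is the intersection of the setwise stabilizers of the classes of `e`, then the
2-closure of `G_e` is contained in `(G^(2))_e`, the kernel of the action of the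
2-closure of `G` on `Ω/e`. -/
theorem twoClosure_classKernel_le
    {Ω : Type*} [Finite Ω] (G : Subgroup (Equiv.Perm Ω)) (s : Setoid Ω)
    (hinv : ∀ g ∈ G, ∀ a b : Ω, s.r a b → s.r (g a) (g b)) :
    twoClosure (G ⊓ classStab s) ≤ twoClosure G ⊓ classStab s :=
  twoClosure_classKernel_le_general G s
end

section
/- Let G be a transitive permutation group of prime degree p. If G is solvable, then either G is regular (cyclic of order p) or G is a Frobenius group, i.e., every two-point stabilizer in G is trivial. -/
/-!
A regular group has trivial two-point stabilizers, so the second alternative always holds.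
The last nontrivial term `N` of the derived series of `G` is an abelian normal subgroup.
A group action of prime degree is primitive, so `N` is transitive, and an abelian transitive
group is regular. If `g` fixes `a` and `b = n • a` with `n ∈ N`, then `g n g⁻¹` and `n` are
elements of the regular group `N` agreeing at `a`, so `g` commutes with `n`. As `n ≠ 1`,
the cyclic group `⟨n⟩` is normal in the abelian `N`, hence again transitive; `g` commutes with
it and fixes `a`, so `g` fixes every point.
-/

theorem IsSolvable.exists_normal_isMulCommutative_ne_bot (G : Type*) [Group G]
    [Group.IsSolvable G] [Nontrivial G] :
    ∃ N : Subgroup G, N.Normal ∧ IsMulCommutative N ∧ N ≠ ⊥ := by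
  classical
  have hP : ∃ n, derivedSeries G n = ⊥ := Group.IsSolvable.solvable
  obtain ⟨m, hm⟩ : ∃ m, Nat.find hP = m + 1 := by
    refine Nat.exists_eq_succ_of_ne_zero fun h0 => ?_
    have := Nat.find_spec hP
    rw [h0, derivedSeries_zero] at this
    exact top_ne_bot this
  refine ⟨derivedSeries G m, derivedSeries_normal G m, ?_, Nat.find_min hP (by omega)⟩
  rw [← Subgroup.commutator_self_eq_bot_iff, ← derivedSeries_succ, ← hm]
  exact Nat.find_spec hP

namespace MulAction

theorem IsPretransitive.eq_id_of_commute_of_apply_eq {M X : Type*} [SMul M X]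
    [IsPretransitive M X] {f : X → X} (hf : ∀ m : M, Function.Commute f (m • ·)) {a : X}
    (ha : f a = a) : f = id := by
  funext x
  obtain ⟨m, rfl⟩ := MulAction.exists_smul_eq M a x
  rw [id, hf m a, ha]

variable {M X : Type*} [Group M] [MulAction M X]

theorem eq_one_of_smul_eq_self [FaithfulSMul M X] [IsMulCommutative M] [IsPretransitive M X]
    {m : M} {a : X} (ha : m • a = a) : m = 1 := by
  refine eq_of_smul_eq_smul (α := X) fun x => ?_
  have hm : (m • ·) = id := IsPretransitive.eq_id_of_commute_of_apply_eq
    (fun (n : M) x => by simp only [smul_smul, mul_comm' m n]) ha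
  rw [one_smul]
  exact congrFun hm x

theorem isPretransitive_of_normal_of_prime_card [FaithfulSMul M X] [IsPretransitive M X]
    (hp : (Nat.card X).Prime) {N : Subgroup M} [N.Normal] (hN : N ≠ ⊥) :
    IsPretransitive N X := by
  have := IsPreprimitive.of_prime_card (G := M) hp
  refine IsQuasiPreprimitive.isPretransitive_of_normal fun hfix => hN ?_
  refine (Subgroup.eq_bot_iff_forall N).mpr fun n hn => eq_of_smul_eq_smul (α := X) fun x => ?_
  have hx : x ∈ fixedPoints N X := hfix ▸ Set.mem_univ x
  rw [one_smul]
  exact hx ⟨n, hn⟩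

theorem commute_of_smul_smul_eq [FaithfulSMul M X] (N : Subgroup M) [N.Normal]
    [IsMulCommutative N] [IsPretransitive N X] {g n : M} (hn : n ∈ N) {a : X}
    (hga : g • a = a) (hgn : g • n • a = n • a) : Commute g n := by
  have hmem : n⁻¹ * (g * n * g⁻¹) ∈ N := N.mul_mem (N.inv_mem hn) (‹N.Normal›.conj_mem n hn g)
  have hfix : (⟨_, hmem⟩ : N) • a = a := by
    change (n⁻¹ * (g * n * g⁻¹)) • a = a
    rw [mul_smul, mul_smul, mul_smul, inv_smul_eq_iff, ← hgn, inv_smul_eq_iff.mpr hga.symm]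
  have hconj : g * n * g⁻¹ = n :=
    (inv_mul_eq_one.mp (congrArg Subtype.val (eq_one_of_smul_eq_self hfix))).symm
  exact mul_inv_eq_iff_eq_mul.mp hconj

end MulAction

open MulAction

theorem solvable_transitive_prime_degree_regular_or_frobenius_general
    {Δ : Type*} {p : ℕ} (hp : p.Prime) (hcard : Nat.card Δ = p)
    (G : Subgroup (Equiv.Perm Δ)) (htrans : ∀ a b : Δ, ∃ g ∈ G, g a = b)
    (hsolv : IsSolvable G) :
    (∀ g ∈ G, (∃ a : Δ, g a = a) → g = 1) ∨
    (∀ g ∈ G, ∀ a b : Δ, a ≠ b → g a = a → g b = b → g = 1) := by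
  refine Or.inr fun g hg a b hab hga hgb => ?_
  lift g to G using hg
  have hprime : (Nat.card Δ).Prime := hcard ▸ hp
  have : IsPretransitive G Δ := ⟨fun x y =>
    let ⟨g, hg, hgxy⟩ := htrans x y
    ⟨⟨g, hg⟩, hgxy⟩⟩
  have : Nontrivial G := by
    obtain ⟨g₀, hg₀⟩ := exists_smul_eq G a b
    exact nontrivial_of_ne g₀ 1 fun h => hab (by rwa [h, one_smul] at hg₀)
  have : Group.IsSolvable G := hsolv
  obtain ⟨N, _, _, hNbot⟩ := IsSolvable.exists_normal_isMulCommutative_ne_bot G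
  have : IsPretransitive N Δ := isPretransitive_of_normal_of_prime_card hprime hNbot
  obtain ⟨n, hn⟩ := exists_smul_eq N a b
  have hn1 : n ≠ 1 := fun h => hab (by rwa [h, one_smul] at hn)
  have hcomm : Commute g n :=
    commute_of_smul_smul_eq N n.2 (a := a) hga (by change g • b = b at hgb; rwa [← hn] at hgb)
  have : IsPretransitive (Subgroup.zpowers n) Δ :=
    isPretransitive_of_normal_of_prime_card hprime (Subgroup.zpowers_ne_bot.mpr hn1)
  have hcentral : ∀ z : Subgroup.zpowers n, Commute g ((z : N) : G) := by
    rintro ⟨_, k, rfl⟩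
    simpa using hcomm.zpow_right k
  have hid := IsPretransitive.eq_id_of_commute_of_apply_eq (M := Subgroup.zpowers n)
    (f := (g • ·)) (fun z x => show g • ((z : N) : G) • x = ((z : N) : G) • g • x by
      rw [smul_smul, smul_smul, (hcentral z).eq]) hga
  rw [← Subgroup.coe_one, Subtype.coe_inj]
  exact eq_of_smul_eq_smul (congrFun hid)

/-- Galois: a transitive solvable permutation group `G` of prime degree
`p` is either regular (equivalently, cyclic of order `p`) or a Frobenius group,
i.e. every two-point stabilizer in `G` is trivial. -/
theorem solvable_transitive_prime_degree_regular_or_frobenius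
    {Δ : Type*} [Fintype Δ] {p : ℕ} (hp : p.Prime) (hcard : Nat.card Δ = p)
    (G : Subgroup (Equiv.Perm Δ)) (htrans : ∀ a b : Δ, ∃ g ∈ G, g a = b)
    (hsolv : IsSolvable G) :
    (∀ g ∈ G, (∃ a : Δ, g a = a) → g = 1) ∨
    (∀ g ∈ G, ∀ a b : Δ, a ≠ b → g a = a → g b = b → g = 1) :=
  solvable_transitive_prime_degree_regular_or_frobenius_general hp hcard G htrans hsolv
end
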